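/- arXiv:1012.3132 — 2 statements merged into one kernel-verified Lean document; each statement's English description precedes it below -/
import Mathlib

section
/- Let (a_n) be a sequence of complex numbers such that sup_N (1/N) ∑_{n=1}^{N} |a_n|² < ∞ and such that sup_{ε ∈ [0,1)} |(1/N) ∑_{n=1}^{N} a_n e^{2πinε}| → 0 as N → ∞. Then for every measure-preserving system (Y, 𝓖, ν, S) on a probability space and every g ∈ L^∞(ν), the functions y ↦ (1/N) ∑_{n=1}^{N} a_n g(S^n y) converge to 0 in L²(ν) as N → ∞. -/
/-!
Fix `y`, put `c m = g (S^[m] y)` and reverse the weights: with `A = ∑ aₙ X^(N-n)` and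
`C = ∑_{m<2N} cₘ X^m`, the correlations `∑ aₙ c_(n+k)`, `k < N`, are coefficients of `A * C`.
Parseval on the unit circle bounds the sum of their squares by `sup_{|z|=1} |A z|² · ∑ |cₘ|²`, and
`|A z| = |∑ aₙ z⁻ⁿ|` is controlled by the Wiener–Wintner supremum `W_N`. Since `S` preserves `ν`,
the `N` shifted averages all have the `L²` norm of the average itself, so integrating in `y` gives
`‖(1/N) ∑ aₙ g ∘ Sⁿ‖₂ ≤ √2 · D · W_N → 0`.
-/

open MeasureTheory Filter Finset

namespace Polynomial

open Real

lemma sum_sq_norm_coeff_le_circleAverage (p : ℂ[X]) (t : Finset ℕ) :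
    ∑ i ∈ t, ‖p.coeff i‖ ^ 2 ≤ circleAverage (fun z ↦ ‖p.eval z‖ ^ 2) 0 1 := by
  rw [← p.sum_sq_norm_coeff_eq_circleAverage, ← sum_filter_of_ne (p := (· ∈ p.support))
    fun i _ hi ↦ mem_support_iff.2 (norm_ne_zero_iff.1 (pow_ne_zero_iff two_ne_zero |>.1 hi))]
  exact sum_le_sum_of_subset_of_nonneg (fun _ hi ↦ (mem_filter.1 hi).2) fun _ _ _ ↦ sq_nonneg _

lemma coeff_sum_range_monomial (c : ℕ → ℂ) (L i : ℕ) :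
    (∑ m ∈ range L, monomial m (c m)).coeff i = if i < L then c i else 0 := by
  simp [finsetSum_coeff, coeff_monomial]

lemma circleAverage_sq_norm_eval_sum_range_monomial (c : ℕ → ℂ) (L : ℕ) :
    circleAverage (fun z ↦ ‖(∑ m ∈ range L, monomial m (c m)).eval z‖ ^ 2) 0 1
      = ∑ m ∈ range L, ‖c m‖ ^ 2 := by
  rw [← sum_sq_norm_coeff_eq_circleAverage, sum_subset (s₂ := range L)]
  · exact sum_congr rfl fun m hm ↦ by rw [coeff_sum_range_monomial, if_pos (mem_range.1 hm)]
  · intro i hi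
    rw [mem_support_iff, coeff_sum_range_monomial] at hi
    exact mem_range.2 (by_contra fun h ↦ hi (if_neg h))
  · intro i _ hi
    rw [notMem_support_iff.1 hi, norm_zero, sq, mul_zero]

lemma circleAverage_sq_norm_eval_mul_le (p q : ℂ[X]) {W : ℝ}
    (hp : ∀ z : ℂ, ‖z‖ = 1 → ‖p.eval z‖ ≤ W) :
    circleAverage (fun z ↦ ‖(p * q).eval z‖ ^ 2) 0 1
      ≤ W ^ 2 * circleAverage (fun z ↦ ‖q.eval z‖ ^ 2) 0 1 := by
  rw [← smul_eq_mul (W ^ 2), ← circleAverage_fun_smul]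
  refine circleAverage_mono ?_ ?_ fun z hz ↦ ?_
  · exact (by fun_prop : Continuous fun z ↦ ‖(p * q).eval z‖ ^ 2).continuousOn.circleIntegrable
      zero_le_one
  · exact (by fun_prop : Continuous fun z ↦ W ^ 2 • ‖q.eval z‖ ^ 2).continuousOn.circleIntegrable
      zero_le_one
  · have hz : ‖z‖ = 1 := by simpa using hz
    rw [eval_mul, norm_mul, mul_pow, smul_eq_mul]
    gcongr
    exact hp z hz

lemma coeff_add_sum_monomial_sub_mul_sum_range_monomial (a c : ℕ → ℂ) {s : Finset ℕ} {N K : ℕ}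
    (hs : ∀ n ∈ s, n ≤ N) {k : ℕ} (hk : k < K) :
    ((∑ n ∈ s, monomial (N - n) (a n)) * ∑ m ∈ range (N + K), monomial m (c m)).coeff (N + k)
      = ∑ n ∈ s, a n * c (n + k) := by
  simp only [sum_mul_sum, monomial_mul_monomial, finsetSum_coeff, coeff_monomial]
  refine sum_congr rfl fun n hn ↦ ?_
  have hnN := hs n hn
  rw [sum_congr rfl fun m _ ↦ if_congr (show N - n + m = N + k ↔ n + k = m by omega) rfl rfl,
    sum_ite_eq, if_pos (mem_range.2 (by omega))]

lemma norm_eval_sum_monomial_sub (a : ℕ → ℂ) {s : Finset ℕ} {N : ℕ} (hs : ∀ n ∈ s, n ≤ N)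
    {z : ℂ} (hz : ‖z‖ = 1) :
    ‖(∑ n ∈ s, monomial (N - n) (a n)).eval z‖ = ‖∑ n ∈ s, a n * z⁻¹ ^ n‖ := by
  have hz0 : z ≠ 0 := norm_ne_zero_iff.1 (by rw [hz]; exact one_ne_zero)
  have : (∑ n ∈ s, monomial (N - n) (a n)).eval z = z ^ N * ∑ n ∈ s, a n * z⁻¹ ^ n := by
    rw [eval_finsetSum, mul_sum]
    refine sum_congr rfl fun n hn ↦ ?_
    rw [eval_monomial, pow_sub₀ z hz0 (hs n hn), inv_pow]
    ring
  rw [this, norm_mul, norm_pow, hz, one_pow, one_mul]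

theorem sum_sq_norm_sum_mul_shift_le (a c : ℕ → ℂ) {s : Finset ℕ} {N : ℕ}
    (hs : ∀ n ∈ s, n ≤ N) (K : ℕ) {W : ℝ}
    (hW : ∀ z : ℂ, ‖z‖ = 1 → ‖∑ n ∈ s, a n * z ^ n‖ ≤ W) :
    ∑ k ∈ range K, ‖∑ n ∈ s, a n * c (n + k)‖ ^ 2 ≤ W ^ 2 * ∑ m ∈ range (N + K), ‖c m‖ ^ 2 := by
  set A := ∑ n ∈ s, monomial (N - n) (a n)
  set C := ∑ m ∈ range (N + K), monomial m (c m)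
  have hA : ∀ z : ℂ, ‖z‖ = 1 → ‖A.eval z‖ ≤ W := fun z hz ↦ by
    rw [norm_eval_sum_monomial_sub a hs hz]
    exact hW z⁻¹ (by rw [norm_inv, hz, inv_one])
  calc ∑ k ∈ range K, ‖∑ n ∈ s, a n * c (n + k)‖ ^ 2
      = ∑ i ∈ (range K).map (addLeftEmbedding N), ‖(A * C).coeff i‖ ^ 2 := by
        rw [sum_map]
        exact sum_congr rfl fun k hk ↦ by
          rw [addLeftEmbedding_apply,
            coeff_add_sum_monomial_sub_mul_sum_range_monomial a c hs (mem_range.1 hk)]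
    _ ≤ circleAverage (fun z ↦ ‖(A * C).eval z‖ ^ 2) 0 1 :=
        sum_sq_norm_coeff_le_circleAverage _ _
    _ ≤ W ^ 2 * circleAverage (fun z ↦ ‖C.eval z‖ ^ 2) 0 1 :=
        circleAverage_sq_norm_eval_mul_le A C hA
    _ = W ^ 2 * ∑ m ∈ range (N + K), ‖c m‖ ^ 2 := by
        rw [circleAverage_sq_norm_eval_sum_range_monomial]

end Polynomial

section WienerWintner

open Complex Real

lemma Complex.exists_mem_Ico_exp_eq_of_norm_eq_one {z : ℂ} (hz : ‖z‖ = 1) :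
    ∃ ε ∈ Set.Ico (0 : ℝ) 1, exp (2 * π * I * ε) = z := by
  refine ⟨Int.fract (arg z / (2 * π)), ⟨Int.fract_nonneg _, Int.fract_lt_one _⟩, ?_⟩
  have : 2 * π * I * (Int.fract (arg z / (2 * π)) : ℝ)
      = arg z * I - ⌊arg z / (2 * π)⌋ * (2 * π * I) := by
    rw [Int.fract]
    push_cast
    field_simp
  rw [this, Complex.exp_sub, exp_int_mul_two_pi_mul_I, div_one]
  simpa [hz] using norm_mul_exp_arg_mul_I z

lemma norm_mul_sum_mul_pow_le_iSup (a : ℕ → ℂ) (s : Finset ℕ) (w : ℂ) {z : ℂ} (hz : ‖z‖ = 1) :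
    ‖w * ∑ n ∈ s, a n * z ^ n‖
      ≤ ⨆ ε ∈ Set.Ico (0 : ℝ) 1, ‖w * ∑ n ∈ s, a n * exp (2 * π * I * n * ε)‖ := by
  set F : ℝ → ℝ := fun ε ↦ ‖w * ∑ n ∈ s, a n * exp (2 * π * I * n * ε)‖
  have hF (ε : ℝ) : F ε ≤ ‖w‖ * ∑ n ∈ s, ‖a n‖ := by
    simp only [F, norm_mul]
    gcongr
    refine (norm_sum_le _ _).trans (sum_le_sum fun n _ ↦ ?_)
    rw [norm_mul, show 2 * π * I * n * ε = ((2 * π * n * ε : ℝ) : ℂ) * I by push_cast; ring,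
      norm_exp_ofReal_mul_I, mul_one]
  obtain ⟨ε, hε, rfl⟩ := exists_mem_Ico_exp_eq_of_norm_eq_one hz
  have hpow (n : ℕ) : exp (2 * π * I * ε) ^ n = exp (2 * π * I * n * ε) := by
    rw [← Complex.exp_nat_mul]; ring_nf
  simp only [hpow]
  refine le_ciSup₂ (f := fun ε (_ : ε ∈ Set.Ico (0 : ℝ) 1) ↦ F ε)
    ⟨‖w‖ * ∑ n ∈ s, ‖a n‖, ?_⟩ ε hε
  rintro _ ⟨_, ⟨ε', rfl⟩, ⟨_, rfl⟩⟩
  exact hF ε'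

lemma sum_sq_norm_average_shift_le (a c : ℕ → ℂ) (N : ℕ) {D W : ℝ} (hc : ∀ m, ‖c m‖ ≤ D)
    (hW : ∀ z : ℂ, ‖z‖ = 1 → ‖(N : ℂ)⁻¹ * ∑ n ∈ Icc 1 N, a n * z ^ n‖ ≤ W) :
    ∑ k ∈ range N, ‖(N : ℂ)⁻¹ * ∑ n ∈ Icc 1 N, a n * c (n + k)‖ ^ 2 ≤ N * (2 * D ^ 2 * W ^ 2) := by
  simp only [mul_sum, ← mul_assoc] at hW
  calc ∑ k ∈ range N, ‖(N : ℂ)⁻¹ * ∑ n ∈ Icc 1 N, a n * c (n + k)‖ ^ 2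
      = ∑ k ∈ range N, ‖∑ n ∈ Icc 1 N, (N : ℂ)⁻¹ * a n * c (n + k)‖ ^ 2 := by
        simp only [mul_sum, mul_assoc]
    _ ≤ W ^ 2 * ∑ m ∈ range (N + N), ‖c m‖ ^ 2 :=
        Polynomial.sum_sq_norm_sum_mul_shift_le _ c (fun n hn ↦ (mem_Icc.1 hn).2) N hW
    _ ≤ W ^ 2 * ∑ m ∈ range (N + N), D ^ 2 := by
        gcongr with m
        exact hc m
    _ = N * (2 * D ^ 2 * W ^ 2) := by
        rw [sum_const, card_range, nsmul_eq_mul]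
        push_cast
        ring

variable {Y : Type*} [MeasurableSpace Y] {ν : Measure Y} {S : Y → Y}

lemma MeasureTheory.MeasurePreserving.lintegral_sum_iterate (hS : MeasurePreserving S ν ν)
    {F : Y → ENNReal} (hF : Measurable F) (K : ℕ) :
    ∫⁻ y, ∑ k ∈ range K, F (S^[k] y) ∂ν = K * ∫⁻ y, F y ∂ν := by
  rw [lintegral_finsetSum (f := fun k y ↦ F (S^[k] y)) _
    fun k _ ↦ hF.comp (hS.measurable.iterate k)]
  simp [(hS.iterate _).lintegral_comp hF]

lemma MeasureTheory.eLpNorm_two_le_ofReal_sqrt {E : Type*} [NormedAddCommGroup E] {f : Y → E}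
    {B : ℝ} (h : ∫⁻ y, ‖f y‖ₑ ^ 2 ∂ν ≤ ENNReal.ofReal B) :
    eLpNorm f 2 ν ≤ ENNReal.ofReal √B := by
  have key := eLpNorm_nnreal_pow_eq_lintegral (f := f) (μ := ν) (p := 2) two_ne_zero
  simp only [ENNReal.coe_ofNat, NNReal.coe_ofNat, ENNReal.rpow_two] at key
  rw [← ENNReal.pow_le_pow_left_iff two_ne_zero, key, ← ENNReal.ofReal_pow (Real.sqrt_nonneg B),
    Real.sq_sqrt']
  exact h.trans (ENNReal.ofReal_le_ofReal (le_max_left B 0))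

theorem eLpNorm_weighted_average_le [IsProbabilityMeasure ν] (hS : MeasurePreserving S ν ν)
    {g : Y → ℂ} (hg : Measurable g) {D : ℝ} (hD : ∀ y, ‖g y‖ ≤ D) (a : ℕ → ℂ) {N : ℕ}
    (hN : N ≠ 0) {W : ℝ}
    (hW : ∀ z : ℂ, ‖z‖ = 1 → ‖(N : ℂ)⁻¹ * ∑ n ∈ Icc 1 N, a n * z ^ n‖ ≤ W) :
    eLpNorm (fun y ↦ (N : ℂ)⁻¹ * ∑ n ∈ Icc 1 N, a n * g (S^[n] y)) 2 ν
      ≤ ENNReal.ofReal √(2 * D ^ 2 * W ^ 2) := by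
  set f : Y → ℂ := fun y ↦ (N : ℂ)⁻¹ * ∑ n ∈ Icc 1 N, a n * g (S^[n] y)
  have hf : Measurable f :=
    measurable_const.mul (Finset.measurable_sum _ fun n _ ↦
      measurable_const.mul (hg.comp (hS.measurable.iterate n)))
  have hshift (y : Y) (k : ℕ) :
      f (S^[k] y) = (N : ℂ)⁻¹ * ∑ n ∈ Icc 1 N, a n * g (S^[n + k] y) := by
    simp only [f, Function.iterate_add_apply]
  have horbit (y : Y) :
      ∑ k ∈ range N, ‖f (S^[k] y)‖ₑ ^ 2 ≤ N * ENNReal.ofReal (2 * D ^ 2 * W ^ 2) := by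
    calc ∑ k ∈ range N, ‖f (S^[k] y)‖ₑ ^ 2
        = ENNReal.ofReal (∑ k ∈ range N, ‖f (S^[k] y)‖ ^ 2) := by
          simp only [ENNReal.ofReal_sum_of_nonneg fun _ _ ↦ sq_nonneg _,
            ENNReal.ofReal_pow (norm_nonneg _), ofReal_norm]
      _ ≤ ENNReal.ofReal (N * (2 * D ^ 2 * W ^ 2)) := by
          simp only [hshift]
          exact ENNReal.ofReal_le_ofReal
            (sum_sq_norm_average_shift_le a (fun m ↦ g (S^[m] y)) N (fun m ↦ hD _) hW)
      _ = N * ENNReal.ofReal (2 * D ^ 2 * W ^ 2) := by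
          rw [ENNReal.ofReal_mul (Nat.cast_nonneg _), ENNReal.ofReal_natCast]
  apply eLpNorm_two_le_ofReal_sqrt
  refine (ENNReal.mul_le_mul_iff_right (Nat.cast_ne_zero.2 hN) (ENNReal.natCast_ne_top N)).1 ?_
  calc (N : ENNReal) * ∫⁻ y, ‖f y‖ₑ ^ 2 ∂ν
      = ∫⁻ y, ∑ k ∈ range N, ‖f (S^[k] y)‖ₑ ^ 2 ∂ν :=
        (hS.lintegral_sum_iterate (hf.enorm.pow_const 2) N).symm
    _ ≤ ∫⁻ _, N * ENNReal.ofReal (2 * D ^ 2 * W ^ 2) ∂ν := lintegral_mono horbit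
    _ = N * ENNReal.ofReal (2 * D ^ 2 * W ^ 2) := by simp

end WienerWintner

theorem wiener_wintner_implies_L2_return_times_general (a : ℕ → ℂ)
    (hWW : Tendsto (fun N : ℕ => ⨆ ε ∈ Set.Ico (0 : ℝ) 1,
        ‖(N : ℂ)⁻¹ * ∑ n ∈ Icc 1 N, a n * Complex.exp (2 * Real.pi * Complex.I * n * ε)‖)
      atTop (nhds 0)) :
    ∀ (Y : Type) [MeasurableSpace Y] (ν : Measure Y), IsProbabilityMeasure ν →
      ∀ S : Y → Y, MeasurePreserving S ν ν →
      ∀ g : Y → ℂ, Measurable g → (∃ D : ℝ, ∀ y, ‖g y‖ ≤ D) →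
      Tendsto
        (fun N : ℕ => eLpNorm (fun y => (N : ℂ)⁻¹ * ∑ n ∈ Icc 1 N, a n * g (S^[n] y)) 2 ν)
        atTop (nhds 0) := by
  intro Y _ ν _ S hS g hg ⟨D, hD⟩
  set W : ℕ → ℝ := fun N ↦ ⨆ ε ∈ Set.Ico (0 : ℝ) 1,
    ‖(N : ℂ)⁻¹ * ∑ n ∈ Icc 1 N, a n * Complex.exp (2 * Real.pi * Complex.I * n * ε)‖
  have hbound : ∀ᶠ N : ℕ in atTop,
      eLpNorm (fun y ↦ (N : ℂ)⁻¹ * ∑ n ∈ Icc 1 N, a n * g (S^[n] y)) 2 ν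
        ≤ ENNReal.ofReal √(2 * D ^ 2 * W N ^ 2) :=
    (eventually_ne_atTop 0).mono fun N hN ↦
      eLpNorm_weighted_average_le hS hg hD a hN fun _ hz ↦ norm_mul_sum_mul_pow_le_iSup a _ _ hz
  have hlim : Tendsto (fun N ↦ ENNReal.ofReal √(2 * D ^ 2 * W N ^ 2)) atTop (nhds 0) := by
    simpa using ENNReal.tendsto_ofReal ((hWW.pow 2).const_mul (2 * D ^ 2)).sqrt
  exact tendsto_of_tendsto_of_tendsto_of_le_of_le' tendsto_const_nhds hlim
    (Eventually.of_forall fun _ ↦ zero_le) hbound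

/-- If `(a_n)` has bounded quadratic Cesàro averages and its Wiener–Wintner suprema
`sup_{ε ∈ [0,1)} |(1/N) ∑_{n=1}^N a_n e^{2πinε}|` tend to `0`, then for every probability
measure-preserving system `(Y, ν, S)` and every `g ∈ L^∞(ν)` the averages
`(1/N) ∑_{n=1}^N a_n g(S^n y)` converge to `0` in `L²(ν)`. -/
theorem wiener_wintner_implies_L2_return_times (a : ℕ → ℂ)
    (hbound : ∃ M : ℝ, ∀ N : ℕ, 1 ≤ N → (N : ℝ)⁻¹ * ∑ n ∈ Icc 1 N, ‖a n‖ ^ 2 ≤ M)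
    (hWW : Tendsto (fun N : ℕ => ⨆ ε ∈ Set.Ico (0 : ℝ) 1,
        ‖(N : ℂ)⁻¹ * ∑ n ∈ Icc 1 N, a n * Complex.exp (2 * Real.pi * Complex.I * n * ε)‖)
      atTop (nhds 0)) :
    ∀ (Y : Type) [MeasurableSpace Y] (ν : Measure Y), IsProbabilityMeasure ν →
      ∀ S : Y → Y, MeasurePreserving S ν ν →
      ∀ g : Y → ℂ, Measurable g → (∃ D : ℝ, ∀ y, ‖g y‖ ≤ D) →
      Tendsto
        (fun N : ℕ => eLpNorm (fun y => (N : ℂ)⁻¹ * ∑ n ∈ Icc 1 N, a n * g (S^[n] y)) 2 ν)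
        atTop (nhds 0) :=
  wiener_wintner_implies_L2_return_times_general a hWW
end

section
/- (Well-definedness of the second seminorm) Let (X, 𝓕, μ, T) be a measure-preserving system on a probability space and f ∈ L^∞(μ). Then the limit lim_{H→∞} (1/H) ∑_{h=1}^{H} |∫_X f · conj(f∘T^h) dμ|² exists. Consequently the quantity |||f|||₂ defined by |||f|||₂⁴ = lim_{H→∞} (1/H) ∑_{h=1}^{H} |∫ f · conj(f∘T^h) dμ|² is well defined. -/
/-!
Put `F (x, y) = f x * conj (f y)` on `X × X`. By Fubini,
`|∫ f * conj (f ∘ T^h) dμ|² = ⟪F, F ∘ (T × T)^h⟫` in `L²(μ ⊗ μ)`. As `T × T` preserves `μ ⊗ μ`,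
composition with it is an isometry of `L²(μ ⊗ μ)`, so by von Neumann's mean ergodic theorem the
Cesàro averages of these inner products converge.
-/

open MeasureTheory Filter Finset
open scoped Topology

theorem ContinuousLinearMap.exists_tendsto_average_inner_iterate
    {𝕜 E : Type*} [RCLike 𝕜] [NormedAddCommGroup E] [InnerProductSpace 𝕜 E] [CompleteSpace E]
    (U : E →L[𝕜] E) (hU : ‖U‖ ≤ 1) (x y : E) :
    ∃ L : 𝕜, Tendsto (fun n : ℕ => (n : 𝕜)⁻¹ * ∑ h ∈ Icc 1 n, inner 𝕜 x (U^[h] y))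
      atTop (𝓝 L) := by
  -- the sum over `1 ≤ h ≤ n` is the Birkhoff sum of `U y`, not of `y`
  have hMET := U.tendsto_birkhoffAverage_orthogonalProjection hU (U y)
  refine ⟨_, (((continuous_const (y := x)).inner continuous_id).tendsto _).comp hMET
    |>.congr fun n => ?_⟩
  rw [Function.comp_apply, birkhoffAverage, birkhoffSum, id, inner_smul_right, inner_sum,
    ← Finset.Ico_add_one_right_eq_Icc, sum_Ico_eq_sum_range]
  simp [add_comm 1, Function.iterate_succ_apply]

section MeasurePreserving

variable {Y 𝕜 : Type*} [RCLike 𝕜] [MeasurableSpace Y] {ν : Measure Y} {S : Y → Y}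

theorem MeasureTheory.MeasurePreserving.inner_toLp_compMeasurePreserving_iterate
    (hS : MeasurePreserving S ν ν) {F : Y → 𝕜} (hF : MemLp F 2 ν) (n : ℕ) :
    inner 𝕜 (hF.toLp F) ((Lp.compMeasurePreservingₗᵢ 𝕜 S hS).toContinuousLinearMap^[n]
      (hF.toLp F)) = ∫ y, (starRingEnd 𝕜) (F y) * F (S^[n] y) ∂ν := by
  have hiter : (Lp.compMeasurePreservingₗᵢ 𝕜 S hS).toContinuousLinearMap^[n] (hF.toLp F)
      =ᵐ[ν] F ∘ S^[n] := by
    rw [show (Lp.compMeasurePreservingₗᵢ 𝕜 S hS).toContinuousLinearMap^[n] =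
      (Lp.compMeasurePreserving S hS)^[n] from rfl, Lp.compMeasurePreserving_iterate]
    exact (Lp.coeFn_compMeasurePreserving _ _).trans
      ((hS.iterate n).quasiMeasurePreserving.ae_eq_comp hF.coeFn_toLp)
  rw [L2.inner_def]
  refine integral_congr_ae ?_
  filter_upwards [hF.coeFn_toLp, hiter] with y hy hy'
  rw [RCLike.inner_apply, hy, hy', mul_comm]
  rfl

theorem MeasureTheory.MeasurePreserving.exists_tendsto_average_integral_conj_mul_comp_iterate
    (hS : MeasurePreserving S ν ν) {F : Y → 𝕜} (hF : MemLp F 2 ν) :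
    ∃ L : 𝕜, Tendsto (fun n : ℕ => (n : 𝕜)⁻¹ *
      ∑ h ∈ Icc 1 n, ∫ y, (starRingEnd 𝕜) (F y) * F (S^[h] y) ∂ν) atTop (𝓝 L) := by
  let U : Lp 𝕜 2 ν →L[𝕜] Lp 𝕜 2 ν := (Lp.compMeasurePreservingₗᵢ 𝕜 S hS).toContinuousLinearMap
  obtain ⟨L, hL⟩ := U.exists_tendsto_average_inner_iterate
    (LinearIsometry.norm_toContinuousLinearMap_le _) (hF.toLp F) (hF.toLp F)
  exact ⟨L, by simpa only [U, hS.inner_toLp_compMeasurePreserving_iterate hF] using hL⟩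

end MeasurePreserving

theorem MeasureTheory.ofReal_norm_integral_sq_eq_integral_prod {X 𝕜 : Type*} [RCLike 𝕜]
    [MeasurableSpace X] (μ : Measure X) [SFinite μ] (g : X → 𝕜) :
    ((‖∫ x, g x ∂μ‖ ^ 2 : ℝ) : 𝕜) = ∫ p, (starRingEnd 𝕜) (g p.1) * g p.2 ∂μ.prod μ := by
  rw [integral_prod_mul (fun x => (starRingEnd 𝕜) (g x)) g, integral_conj, RCLike.conj_mul,
    RCLike.ofReal_pow]

/-- **Well-definedness of the second Host–Kra seminorm.**  For a probability
measure-preserving system `(X, μ, T)` and `f ∈ L^∞(μ)`, the limit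
`lim_H (1/H) ∑_{h=1}^H |∫ f ⬝ conj (f ∘ T^h) dμ|²` exists; consequently `|||f|||₂`,
defined by `|||f|||₂⁴ = lim_H (1/H) ∑_{h=1}^H |∫ f ⬝ conj (f ∘ T^h) dμ|²`, is well
defined. -/
theorem second_seminorm_well_defined
    {X : Type} [MeasurableSpace X] (μ : Measure X) [IsProbabilityMeasure μ]
    (T : X → X) (hT : MeasurePreserving T μ μ)
    (f : X → ℂ) (hfm : Measurable f) (hfb : ∃ C : ℝ, ∀ x, ‖f x‖ ≤ C) :
    ∃ L : ℝ,
      Tendsto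
        (fun H : ℕ => (H : ℝ)⁻¹ * ∑ h ∈ Icc 1 H,
          ‖∫ x, f x * (starRingEnd ℂ) (f (T^[h] x)) ∂μ‖ ^ 2)
        atTop (nhds L) := by
  obtain ⟨C, hC⟩ := hfb
  set F : X × X → ℂ := fun p => f p.1 * (starRingEnd ℂ) (f p.2)
  have hF : MemLp F 2 (μ.prod μ) := by
    have hFm : Measurable F := (hfm.comp measurable_fst).mul
      (Complex.continuous_conj.measurable.comp (hfm.comp measurable_snd))
    refine MemLp.of_bound hFm.aestronglyMeasurable (C * C) (ae_of_all _ fun p => ?_)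
    simpa [F] using mul_le_mul (hC p.1) (hC p.2) (norm_nonneg _) ((norm_nonneg _).trans (hC p.1))
  have hcorr : ∀ h : ℕ, ((‖∫ x, f x * (starRingEnd ℂ) (f (T^[h] x)) ∂μ‖ ^ 2 : ℝ) : ℂ) =
      ∫ p, (starRingEnd ℂ) (F p) * F ((Prod.map T T)^[h] p) ∂μ.prod μ := by
    intro h
    refine (ofReal_norm_integral_sq_eq_integral_prod μ _).trans ?_
    rw [Prod.map_iterate]
    congr 1 with p
    simp only [F, Prod.map_fst, Prod.map_snd, map_mul, Complex.conj_conj]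
    ring
  obtain ⟨L, hL⟩ := (hT.prod hT).exists_tendsto_average_integral_conj_mul_comp_iterate hF
  refine ⟨L.re, (Complex.continuous_re.tendsto L).comp hL |>.congr fun H => ?_⟩
  simp only [Function.comp_apply, ← hcorr, ← Complex.ofReal_sum, ← Complex.ofReal_natCast,
    ← Complex.ofReal_inv, ← Complex.ofReal_mul, Complex.ofReal_re]
end
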